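/- arXiv:2302.01909 — 7 statements merged into one kernel-verified Lean document; each statement's English description precedes it below -/
import Mathlib

section
/- Let V ≤ S_h. Then V × {id} is a symmetry group for the pair (h,n) (i.e. there exists an SPF F with G(F) = V × {id}) if and only if V × {id} is an anonymity group for (h,n) (i.e. there exists an SPF F with G_1(F) = V × {id}). In particular, every anonymity group is a symmetry group. -/
open Equiv

/-- The action of `S_h × S_n` on preference profiles `p : Fin h → Perm (Fin n)`:
`(p^{(φ,ψ)})_i = ψ ∘ p_{φ⁻¹ i}`. -/
def act {h n : ℕ} (g : Perm (Fin h) × Perm (Fin n)) (p : Fin h → Perm (Fin n)) :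
    Fin h → Perm (Fin n) :=
  fun i => g.2 * p (g.1⁻¹ i)

/-- The symmetry group `G(F)` of a social preference function `F`. -/
def symGroup {h n : ℕ} (F : (Fin h → Perm (Fin n)) → Perm (Fin n)) :
    Subgroup (Perm (Fin h) × Perm (Fin n)) where
  carrier := {g | ∀ p, F (act g p) = g.2 * F p}
  one_mem' := by
    intro p
    have h1 : act (1 : Perm (Fin h) × Perm (Fin n)) p = p := by
      funext i; simp [act]
    rw [h1]; simp
  mul_mem' := by
    intro a b ha hb p
    have hab : act (a * b) p = act a (act b p) := by
      funext i
      simp [act, mul_assoc]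
    rw [hab, ha, hb, Prod.snd_mul, mul_assoc]
  inv_mem' := by
    intro a ha p
    have key := ha (act a⁻¹ p)
    have h1 : act a (act a⁻¹ p) = p := by
      funext i
      simp [act, mul_assoc]
    rw [h1] at key
    rw [key]
    simp [mul_assoc]

/-- The anonymity group `G₁(F) = G(F) ∩ (S_h × {id})`. -/
def anonGroup {h n : ℕ} (F : (Fin h → Perm (Fin n)) → Perm (Fin n)) :
    Subgroup (Perm (Fin h) × Perm (Fin n)) :=
  symGroup F ⊓ Subgroup.prod ⊤ ⊥

/-! Redefine `F` to return the identity ranking on unanimous profiles. Unanimity is preserved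
by the action in both directions, so every anonymity symmetry of `F` survives; but a symmetry
`(φ, ψ)` of the new function sends the unanimous profile `1` to the unanimous profile `ψ`,
and comparing outputs gives `1 = ψ * 1`, so every symmetry of the new function has `ψ = 1`. -/

section

variable {h n : ℕ}

lemma mem_anonGroup {F : (Fin h → Perm (Fin n)) → Perm (Fin n)}
    {g : Perm (Fin h) × Perm (Fin n)} :
    g ∈ anonGroup F ↔ g ∈ symGroup F ∧ g.2 = 1 := by
  simp [anonGroup, Subgroup.mem_prod]

lemma anonGroup_eq_symGroup {F : (Fin h → Perm (Fin n)) → Perm (Fin n)}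
    (hF : symGroup F ≤ Subgroup.prod ⊤ ⊥) : anonGroup F = symGroup F :=
  inf_eq_left.mpr hF

lemma act_const (g : Perm (Fin h) × Perm (Fin n)) (τ : Perm (Fin n)) :
    act g (Function.const (Fin h) τ) = Function.const (Fin h) (g.2 * τ) :=
  rfl

lemma act_mem_range_const_iff (g : Perm (Fin h) × Perm (Fin n)) (p : Fin h → Perm (Fin n)) :
    act g p ∈ Set.range (Function.const (Fin h)) ↔ p ∈ Set.range (Function.const (Fin h)) := by
  constructor
  · rintro ⟨τ, hτ⟩
    refine ⟨g.2⁻¹ * τ, funext fun j => ?_⟩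
    have hj := congrFun hτ (g.1 j)
    simp only [act, Function.const_apply, Perm.coe_inv, symm_apply_apply] at hj
    simp [hj]
  · rintro ⟨τ, rfl⟩
    exact ⟨g.2 * τ, (act_const g τ).symm⟩

open Classical in
noncomputable def unanimityToOne (F : (Fin h → Perm (Fin n)) → Perm (Fin n)) :
    (Fin h → Perm (Fin n)) → Perm (Fin n) :=
  fun p => if p ∈ Set.range (Function.const (Fin h)) then 1 else F p

lemma unanimityToOne_const (F : (Fin h → Perm (Fin n)) → Perm (Fin n)) (τ : Perm (Fin n)) :
    unanimityToOne F (Function.const (Fin h) τ) = 1 :=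
  if_pos ⟨τ, rfl⟩

lemma snd_eq_one_of_mem_symGroup_unanimityToOne {F : (Fin h → Perm (Fin n)) → Perm (Fin n)}
    {g : Perm (Fin h) × Perm (Fin n)} (hg : g ∈ symGroup (unanimityToOne F)) : g.2 = 1 := by
  have h1 := hg (Function.const (Fin h) 1)
  rwa [act_const, unanimityToOne_const, unanimityToOne_const, mul_one, eq_comm] at h1

theorem symGroup_unanimityToOne (F : (Fin h → Perm (Fin n)) → Perm (Fin n)) :
    symGroup (unanimityToOne F) = anonGroup F := by
  ext g
  rw [mem_anonGroup]
  refine ⟨fun hg => ?_, fun ⟨hg, hg₂⟩ p => ?_⟩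
  · have hg₂ := snd_eq_one_of_mem_symGroup_unanimityToOne hg
    refine ⟨fun p => ?_, hg₂⟩
    by_cases hp : p ∈ Set.range (Function.const (Fin h))
    · obtain ⟨τ, rfl⟩ := hp
      simp only [act_const, hg₂, one_mul]
    · have hp' := (act_mem_range_const_iff g p).not.mpr hp
      simpa only [unanimityToOne, if_neg hp, if_neg hp'] using hg p
  · by_cases hp : p ∈ Set.range (Function.const (Fin h))
    · have hp' := (act_mem_range_const_iff g p).mpr hp
      simp only [unanimityToOne, if_pos hp, if_pos hp', hg₂, one_mul]
    · have hp' := (act_mem_range_const_iff g p).not.mpr hp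
      simp only [unanimityToOne, if_neg hp, if_neg hp', hg p]

end

theorem anonymity_iff_symmetry_general (h n : ℕ) :
    (∀ V : Subgroup (Perm (Fin h)),
      ((∃ F : (Fin h → Perm (Fin n)) → Perm (Fin n),
          symGroup F = V.prod (⊥ : Subgroup (Perm (Fin n)))) ↔
       (∃ F : (Fin h → Perm (Fin n)) → Perm (Fin n),
          anonGroup F = V.prod (⊥ : Subgroup (Perm (Fin n)))))) ∧
    (∀ U : Subgroup (Perm (Fin h) × Perm (Fin n)),
      (∃ F : (Fin h → Perm (Fin n)) → Perm (Fin n), anonGroup F = U) →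
        ∃ F : (Fin h → Perm (Fin n)) → Perm (Fin n), symGroup F = U) := by
  refine ⟨fun V => ⟨?_, ?_⟩, ?_⟩
  · rintro ⟨F, hF⟩
    refine ⟨F, (anonGroup_eq_symGroup ?_).trans hF⟩
    rw [hF]
    exact Subgroup.prod_mono le_top le_rfl
  · rintro ⟨F, hF⟩
    exact ⟨unanimityToOne F, (symGroup_unanimityToOne F).trans hF⟩
  · rintro U ⟨F, rfl⟩
    exact ⟨unanimityToOne F, symGroup_unanimityToOne F⟩

/-- For `V ≤ S_h`, `V × {id}` is a symmetry group iff it is an anonymity group;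
in particular every anonymity group is a symmetry group. -/
theorem anonymity_iff_symmetry (h n : ℕ) (hh : 2 ≤ h) (hn : 2 ≤ n) :
    (∀ V : Subgroup (Perm (Fin h)),
      ((∃ F : (Fin h → Perm (Fin n)) → Perm (Fin n),
          symGroup F = V.prod (⊥ : Subgroup (Perm (Fin n)))) ↔
       (∃ F : (Fin h → Perm (Fin n)) → Perm (Fin n),
          anonGroup F = V.prod (⊥ : Subgroup (Perm (Fin n)))))) ∧
    (∀ U : Subgroup (Perm (Fin h) × Perm (Fin n)),
      (∃ F : (Fin h → Perm (Fin n)) → Perm (Fin n), anonGroup F = U) →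
        ∃ F : (Fin h → Perm (Fin n)) → Perm (Fin n), symGroup F = U) :=
  anonymity_iff_symmetry_general h n
end

section
/- For every pair of integers h ≥ 2 and n ≥ 2, the trivial subgroup {(id,id)} of G = S_h × S_n is an anonymity group, a neutrality group, and a symmetry group; that is, there exist social preference functions F, F', F'' : P → S_n with G_1(F) = {(id,id)}, G_2(F') = {(id,id)}, and G(F'') = {(id,id)}. -/
open Equiv

/-- The neutrality group `G₂(F) = G(F) ∩ ({id} × S_n)`. -/
def neutGroup {h n : ℕ} (F : (Fin h → Perm (Fin n)) → Perm (Fin n)) :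
    Subgroup (Perm (Fin h) × Perm (Fin n)) :=
  symGroup F ⊓ Subgroup.prod ⊥ ⊤

/-!
The SPF `prefixSPF τ` (for a fixed `τ ≠ id`) returns `τ` on the profiles in which voters
`0, …, j` rank by `τ` and all later voters by `id`, for some non-last voter `j`, and `id`
everywhere else. It is `id` on all unanimous profiles; as the unanimous profile `id`
is moved to the unanimous profile `ψ`, any symmetry `(φ, ψ)` has `ψ = id`. A symmetry
`(φ, id)` then maps the prefix profiles to prefix profiles of the same size, so `φ` fixes every
initial segment of voters, hence `φ = id`.
-/

section
variable {h n : ℕ}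

theorem snd_eq_one_of_mem_symGroup {F : (Fin h → Perm (Fin n)) → Perm (Fin n)}
    (hF : ∀ c, F (fun _ => c) = 1) {g : Perm (Fin h) × Perm (Fin n)} (hg : g ∈ symGroup F) :
    g.2 = 1 := by
  have hconst : act g (fun _ => 1) = fun _ => g.2 := funext fun _ => mul_one g.2
  have := hg fun _ => 1
  rwa [hconst, hF, hF, mul_one, eq_comm] at this

theorem act_of_snd_eq_one {g : Perm (Fin h) × Perm (Fin n)} (hg : g.2 = 1)
    (p : Fin h → Perm (Fin n)) : act g p = fun i => p (g.1⁻¹ i) := by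
  funext i
  simp [act, hg]

theorem Fin.eq_of_forall_perm_le_iff {σ : Perm (Fin h)} {j k : Fin h}
    (H : ∀ i, σ i ≤ j ↔ i ≤ k) : j = k := by
  have hmap : (Finset.Iic k).map σ.toEmbedding = Finset.Iic j := by
    ext x
    rw [Finset.mem_map_equiv, Finset.mem_Iic, Finset.mem_Iic, ← H, apply_symm_apply]
  have := congrArg Finset.card hmap
  rw [Finset.card_map, Fin.card_Iic, Fin.card_Iic] at this
  exact (Fin.ext (by omega)).symm

def prefixProfile (τ : Perm (Fin n)) (j : Fin h) : Fin h → Perm (Fin n) :=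
  fun i => if i ≤ j then τ else 1

open Classical in
noncomputable def prefixSPF (τ : Perm (Fin n)) : (Fin h → Perm (Fin n)) → Perm (Fin n) :=
  fun p => if ∃ j, ¬IsMax j ∧ p = prefixProfile τ j then τ else 1

variable {τ : Perm (Fin n)}

theorem prefixProfile_ne_const (hτ : τ ≠ 1) {j : Fin h} (hj : ¬IsMax j) (c : Perm (Fin n)) :
    prefixProfile τ j ≠ fun _ => c := by
  obtain ⟨i, hji⟩ := not_isMax_iff.1 hj
  intro hc
  have hj := congrFun hc j
  have hi := congrFun hc i
  simp only [prefixProfile, le_rfl, if_true, not_le.2 hji, if_false] at hj hi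
  exact hτ (hj.trans hi.symm)

theorem le_iff_of_prefixProfile_comp_eq (hτ : τ ≠ 1) {σ : Perm (Fin h)} {j k : Fin h}
    (H : (fun i => prefixProfile τ j (σ i)) = prefixProfile τ k) (i : Fin h) :
    σ i ≤ j ↔ i ≤ k := by
  have hi := congrFun H i
  simp only [prefixProfile] at hi
  split_ifs at hi <;> tauto

theorem prefixSPF_const (hτ : τ ≠ 1) (c : Perm (Fin n)) :
    prefixSPF τ (fun _ : Fin h => c) = 1 :=
  if_neg fun ⟨_, hj, hc⟩ => prefixProfile_ne_const hτ hj c hc.symm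

theorem prefixSPF_prefixProfile {j : Fin h} (hj : ¬IsMax j) :
    prefixSPF τ (prefixProfile τ j) = τ :=
  if_pos ⟨j, hj, rfl⟩

theorem exists_prefixProfile_of_prefixSPF_eq (hτ : τ ≠ 1) {p : Fin h → Perm (Fin n)}
    (hp : prefixSPF τ p = τ) : ∃ k, ¬IsMax k ∧ p = prefixProfile τ k := by
  by_contra hne
  exact hτ (hp.symm.trans (if_neg hne))

theorem symGroup_prefixSPF (hτ : τ ≠ 1) :
    symGroup (prefixSPF τ : (Fin h → Perm (Fin n)) → Perm (Fin n)) = ⊥ := by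
  refine (Subgroup.eq_bot_iff_forall _).2 fun g hg => ?_
  have hψ : g.2 = 1 := snd_eq_one_of_mem_symGroup (prefixSPF_const hτ) hg
  have hφ : ∀ i j, g.1⁻¹ i ≤ j ↔ i ≤ j := by
    intro i j
    by_cases hj : IsMax j
    · exact iff_of_true (hj.isTop _) (hj.isTop _)
    have := hg (prefixProfile τ j)
    rw [act_of_snd_eq_one hψ, hψ, one_mul, prefixSPF_prefixProfile hj] at this
    obtain ⟨k, -, hk⟩ := exists_prefixProfile_of_prefixSPF_eq hτ this
    have H := le_iff_of_prefixProfile_comp_eq hτ hk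
    obtain rfl := Fin.eq_of_forall_perm_le_iff H
    exact H i
  exact Prod.ext (inv_eq_one.1 (Equiv.ext fun i => eq_of_forall_ge_iff (hφ i))) hψ

end

theorem trivial_is_anon_neut_sym_general (h n : ℕ) (hn : 2 ≤ n) :
    (∃ F : (Fin h → Perm (Fin n)) → Perm (Fin n),
        anonGroup F = (⊥ : Subgroup (Perm (Fin h) × Perm (Fin n)))) ∧
    (∃ F' : (Fin h → Perm (Fin n)) → Perm (Fin n),
        neutGroup F' = (⊥ : Subgroup (Perm (Fin h) × Perm (Fin n)))) ∧
    (∃ F'' : (Fin h → Perm (Fin n)) → Perm (Fin n),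
        symGroup F'' = (⊥ : Subgroup (Perm (Fin h) × Perm (Fin n)))) := by
  have : Nontrivial (Fin n) := Fin.nontrivial_iff_two_le.2 hn
  obtain ⟨τ, hτ⟩ := exists_ne (1 : Perm (Fin n))
  have hsym := symGroup_prefixSPF (h := h) hτ
  refine ⟨⟨prefixSPF τ, ?_⟩, ⟨prefixSPF τ, ?_⟩, ⟨prefixSPF τ, hsym⟩⟩
  · rw [anonGroup, hsym, bot_inf_eq]
  · rw [neutGroup, hsym, bot_inf_eq]

/-- For every voting pair, the trivial group is an anonymity group, a
neutrality group and a symmetry group. -/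
theorem trivial_is_anon_neut_sym (h n : ℕ) (hh : 2 ≤ h) (hn : 2 ≤ n) :
    (∃ F : (Fin h → Perm (Fin n)) → Perm (Fin n),
        anonGroup F = (⊥ : Subgroup (Perm (Fin h) × Perm (Fin n)))) ∧
    (∃ F' : (Fin h → Perm (Fin n)) → Perm (Fin n),
        neutGroup F' = (⊥ : Subgroup (Perm (Fin h) × Perm (Fin n)))) ∧
    (∃ F'' : (Fin h → Perm (Fin n)) → Perm (Fin n),
        symGroup F'' = (⊥ : Subgroup (Perm (Fin h) × Perm (Fin n)))) :=
  trivial_is_anon_neut_sym_general h n hn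
end

section
/- Every subgroup of {id} × S_n is a neutrality group: for every subgroup W ≤ S_n and every h ≥ 2 there exists a social preference function F : P → S_n with G_2(F) = {id} × W. -/
open Equiv

/-!
Fix a voter `i₀` and let `F p := p i₀ · r((p i₀)⁻¹ W)`, where `r` picks a representative of
each left coset of `W`. Under `ψ`, the entry `x = p i₀` becomes `ψ x`, and `F` is equivariant
exactly when `x⁻¹ψ⁻¹ W = x⁻¹ W`, i.e. when `ψ ∈ W`.
-/

section CosetTwist

variable {G : Type*} [Group G]

noncomputable def cosetTwist (W : Subgroup G) (x : G) : G :=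
  x * (QuotientGroup.mk x⁻¹ : G ⧸ W).out

theorem cosetTwist_mul_eq_mul_cosetTwist_iff (W : Subgroup G) (g x : G) :
    cosetTwist W (g * x) = g * cosetTwist W x ↔ g ∈ W := by
  rw [cosetTwist, cosetTwist, mul_assoc, mul_right_inj, mul_right_inj, Quotient.out_inj,
    QuotientGroup.eq, mul_inv_rev, mul_inv_rev, inv_inv, inv_inv, mul_inv_cancel_right]

end CosetTwist

theorem mem_neutGroup_iff {h n : ℕ} (F : (Fin h → Perm (Fin n)) → Perm (Fin n))
    (g : Perm (Fin h) × Perm (Fin n)) :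
    g ∈ neutGroup F ↔ g.1 = 1 ∧ ∀ p, F (fun i => g.2 * p i) = g.2 * F p := by
  obtain ⟨φ, ψ⟩ := g
  simp only [neutGroup, Subgroup.mem_inf, Subgroup.mem_prod, Subgroup.mem_bot, Subgroup.mem_top,
    and_true]
  rw [and_comm]
  refine and_congr_right fun hφ => ?_
  subst hφ
  rfl

theorem every_neutrality_group_general (h n : ℕ) (hh : 2 ≤ h)
    (W : Subgroup (Perm (Fin n))) :
    ∃ F : (Fin h → Perm (Fin n)) → Perm (Fin n),
      neutGroup F = (⊥ : Subgroup (Perm (Fin h))).prod W := by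
  let i₀ : Fin h := ⟨0, by omega⟩
  refine ⟨fun p => cosetTwist W (p i₀), ?_⟩
  ext ⟨φ, ψ⟩
  simp only [mem_neutGroup_iff, cosetTwist_mul_eq_mul_cosetTwist_iff, Subgroup.mem_prod,
    Subgroup.mem_bot, forall_const]

/-- Every subgroup of `{id} × S_n` is a neutrality group. -/
theorem every_neutrality_group (h n : ℕ) (hh : 2 ≤ h) (hn : 2 ≤ n)
    (W : Subgroup (Perm (Fin n))) :
    ∃ F : (Fin h → Perm (Fin n)) → Perm (Fin n),
      neutGroup F = (⊥ : Subgroup (Perm (Fin h))).prod W :=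
  every_neutrality_group_general h n hh W
end

section
/- Let h = 4, n = 2, and let K = {id, (12)(34), (13)(24), (14)(23)} be the Klein group in S_4. Then U = K × {id} is a regular subgroup of G = S_4 × S_2, but U is not a symmetry group and not an anonymity group: for every social preference function F : (S_2)^4 → S_2 one has G(F) ≠ K × {id} and G_1(F) ≠ K × {id}. -/
open Equiv

/-- A subgroup `U ≤ S_h × S_n` is regular if every stabilized profile forces
the second component to be the identity. -/
def IsRegularSubgroup {h n : ℕ} (U : Subgroup (Perm (Fin h) × Perm (Fin n))) : Prop :=
  ∀ (p : Fin h → Perm (Fin n)) (g : Perm (Fin h) × Perm (Fin n)),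
    g ∈ U → act g p = p → g.2 = 1

/-! A profile in `(S₂)⁴` is a 2-colouring of the four individuals, and a `K`-anonymous `F` only sees
its `K`-orbit. As `K` acts regularly on the individuals, the colourings with one or three individuals
of a colour form single `K`-orbits, while those with two of each form three orbits, one for each
splitting of the individuals into two pairs. A transposition `(i j)` with `i, j ≠ 0` normalises `K`,
swaps two of these three orbits and fixes every other orbit. Since `F` takes only two values, it
agrees on two of the three orbits, so it is invariant under the corresponding transposition, which
is not in `K`. -/

section SymmetryGroup

variable {h n : ℕ}

theorem act_mk_one (σ : Perm (Fin h)) (p : Fin h → Perm (Fin n)) :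
    act (σ, 1) p = p ∘ ⇑σ⁻¹ :=
  funext fun _ => one_mul _

theorem mk_one_mem_symGroup_iff {F : (Fin h → Perm (Fin n)) → Perm (Fin n)} {σ : Perm (Fin h)} :
    (σ, 1) ∈ symGroup F ↔ ∀ p, F (p ∘ ⇑σ⁻¹) = F p := by
  change (∀ p, F (act (σ, 1) p) = 1 * F p) ↔ _
  simp only [act_mk_one, one_mul]

theorem isRegularSubgroup_prod_bot (K : Subgroup (Perm (Fin h))) :
    IsRegularSubgroup (K.prod (⊥ : Subgroup (Perm (Fin n)))) :=
  fun _ _ hg _ => Subgroup.mem_bot.mp (Subgroup.mem_prod.mp hg).2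

theorem symGroup_ne_prod_bot_and_anonGroup_ne_prod_bot
    {F : (Fin h → Perm (Fin n)) → Perm (Fin n)} {K : Subgroup (Perm (Fin h))}
    {σ : Perm (Fin h)} (hσF : (σ, 1) ∈ symGroup F) (hσK : σ ∉ K) :
    symGroup F ≠ K.prod ⊥ ∧ anonGroup F ≠ K.prod ⊥ := by
  have hσA : (σ, 1) ∈ anonGroup F :=
    Subgroup.mem_inf.mpr ⟨hσF, Subgroup.mem_prod.mpr ⟨trivial, Subgroup.mem_bot.mpr rfl⟩⟩
  exact ⟨fun hF => hσK (Subgroup.mem_prod.mp (hF ▸ hσF)).1,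
    fun hF => hσK (Subgroup.mem_prod.mp (hF ▸ hσA)).1⟩

end SymmetryGroup

section FourArguments

variable {α β : Type*}

theorem eq_of_comm_of_eq_diag {x y : α} (hxy : ∀ z, z = x ∨ z = y) {P Q : α → α → β}
    (hP : ∀ a c, P a c = P c a) (hQ : ∀ a c, Q a c = Q c a) (hdiag : ∀ a, P a a = Q a a)
    (hPQ : P x y = Q x y) (a c : α) : P a c = Q a c := by
  rcases hxy a with rfl | rfl <;> rcases hxy c with rfl | rfl
  exacts [hdiag _, hPQ, (hP _ _).trans (hPQ.trans (hQ _ _)), hdiag _]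

variable (f : α → α → α → α → β)

theorem swap_middle_invariant (hα : ∀ u v w : α, u = v ∨ u = w ∨ v = w)
    (hrev : ∀ a b c d, f d c b a = f a b c d) (hpair : ∀ a c, f a a c c = f a c a c)
    (a b c d : α) : f a c b d = f a b c d := by
  rcases eq_or_ne b c with rfl | hbc
  · rfl
  rcases eq_or_ne a d with rfl | had
  · exact hrev a b c a
  -- the profile is now `a a c c` or `a c a c` up to renaming
  rcases (hα a b c).imp_right (Or.resolve_right · hbc) with rfl | rfl
  · obtain rfl : c = d := ((hα a c d).resolve_left hbc).resolve_left had
    exact (hpair a c).symm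
  · obtain rfl : b = d := ((hα b a d).resolve_left hbc).resolve_right had
    exact hpair a b

theorem exists_transposition_invariant_of_klein_invariant {x y : α}
    (hxy : ∀ z, z = x ∨ z = y) (hβ : ∀ u v w : β, u = v ∨ u = w ∨ v = w)
    (h₁ : ∀ a b c d, f b a d c = f a b c d) (h₂ : ∀ a b c d, f c d a b = f a b c d) :
    (∀ a b c d, f a c b d = f a b c d) ∨ (∀ a b c d, f a d c b = f a b c d) ∨
      (∀ a b c d, f a b d c = f a b c d) := by
  have hα : ∀ u v w : α, u = v ∨ u = w ∨ v = w := fun u v w => by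
    rcases hxy u with rfl | rfl <;> rcases hxy v with rfl | rfl <;>
      rcases hxy w with rfl | rfl <;> simp
  have s01 : ∀ a c, f a a c c = f c c a a := fun a c => (h₂ a a c c).symm
  have s02 : ∀ a c, f a c a c = f c a c a := fun a c => (h₁ a c a c).symm
  have s03 : ∀ a c, f a c c a = f c a a c := fun a c => (h₂ a c c a).symm
  rcases hβ (f x x y y) (f x y x y) (f x y y x) with h | h | h
  · exact .inl <| swap_middle_invariant f hα (fun a b c d => (h₂ b a d c).trans (h₁ a b c d))
      (eq_of_comm_of_eq_diag hxy s01 s02 (fun _ => rfl) h)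
  · have := swap_middle_invariant (fun a b c d => f a b d c) hα (fun a b c d => h₂ a b d c)
      (eq_of_comm_of_eq_diag hxy s01 s03 (fun _ => rfl) h)
    exact .inr <| .inl fun a b c d => this a b d c
  · have := swap_middle_invariant (fun a b c d => f a d c b) hα (fun a b c d => h₁ a d c b)
      (eq_of_comm_of_eq_diag hxy s03 s02 (fun _ => rfl) h.symm)
    exact .inr <| .inr fun a b c d => (this a c d b).symm

end FourArguments

theorem mk_one_mem_symGroup_iff_vec {n : ℕ} {F : (Fin 4 → Perm (Fin n)) → Perm (Fin n)}
    {σ : Perm (Fin 4)} :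
    (σ, 1) ∈ symGroup F ↔ ∀ a b c d, F (![a, b, c, d] ∘ ⇑σ⁻¹) = F ![a, b, c, d] := by
  refine mk_one_mem_symGroup_iff.trans ⟨fun hσ a b c d => hσ _, fun hσ p => ?_⟩
  rw [← FinVec.etaExpand_eq p]
  exact hσ _ _ _ _

theorem exists_transposition_mem_symGroup (K : Subgroup (Perm (Fin 4)))
    (hK : (K : Set (Perm (Fin 4))) =
      {1, swap 0 1 * swap 2 3, swap 0 2 * swap 1 3, swap 0 3 * swap 1 2})
    (F : (Fin 4 → Perm (Fin 2)) → Perm (Fin 2)) (hF : K.prod ⊥ ≤ symGroup F) :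
    ∃ σ ∉ K, (σ, 1) ∈ symGroup F := by
  have mem_K (σ : Perm (Fin 4)) : σ ∈ K ↔ σ = 1 ∨ σ = swap 0 1 * swap 2 3 ∨
      σ = swap 0 2 * swap 1 3 ∨ σ = swap 0 3 * swap 1 2 := by
    rw [← SetLike.mem_coe, hK]; rfl
  have invariant (κ : Perm (Fin 4)) (hκ : κ ∈ K) :=
    mk_one_mem_symGroup_iff_vec.mp (hF (Subgroup.mem_prod.mpr ⟨hκ, Subgroup.mem_bot.mpr rfl⟩))
  have h₁ (a b c d : Perm (Fin 2)) : F ![b, a, d, c] = F ![a, b, c, d] :=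
    (congrArg F (by ext i; fin_cases i <;> rfl)).trans
      (invariant (swap 0 1 * swap 2 3) (by simp [mem_K]) a b c d)
  have h₂ (a b c d : Perm (Fin 2)) : F ![c, d, a, b] = F ![a, b, c, d] :=
    (congrArg F (by ext i; fin_cases i <;> rfl)).trans
      (invariant (swap 0 2 * swap 1 3) (by simp [mem_K]) a b c d)
  rcases exists_transposition_invariant_of_klein_invariant (fun a b c d => F ![a, b, c, d])
    (x := 1) (y := swap 0 1) (by decide) (by decide) h₁ h₂ with h | h | h
  · exact ⟨swap 1 2, by rw [mem_K]; decide, mk_one_mem_symGroup_iff_vec.mpr fun a b c d =>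
      (congrArg F (by ext i; fin_cases i <;> rfl)).trans (h a b c d)⟩
  · exact ⟨swap 1 3, by rw [mem_K]; decide, mk_one_mem_symGroup_iff_vec.mpr fun a b c d =>
      (congrArg F (by ext i; fin_cases i <;> rfl)).trans (h a b c d)⟩
  · exact ⟨swap 2 3, by rw [mem_K]; decide, mk_one_mem_symGroup_iff_vec.mpr fun a b c d =>
      (congrArg F (by ext i; fin_cases i <;> rfl)).trans (h a b c d)⟩

/-- For `(h,n) = (4,2)` and `K` the Klein group in `S_4`, the subgroup
`K × {id}` is regular but is neither a symmetry group nor an anonymity group. -/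
theorem klein_not_symmetry_not_anonymity (K : Subgroup (Perm (Fin 4)))
    (hK : (K : Set (Perm (Fin 4))) =
      {1, Equiv.swap 0 1 * Equiv.swap 2 3,
          Equiv.swap 0 2 * Equiv.swap 1 3,
          Equiv.swap 0 3 * Equiv.swap 1 2}) :
    IsRegularSubgroup (K.prod (⊥ : Subgroup (Perm (Fin 2)))) ∧
    ∀ F : (Fin 4 → Perm (Fin 2)) → Perm (Fin 2),
      symGroup F ≠ K.prod (⊥ : Subgroup (Perm (Fin 2))) ∧
      anonGroup F ≠ K.prod (⊥ : Subgroup (Perm (Fin 2))) := by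
  refine ⟨isRegularSubgroup_prod_bot K, fun F => ?_⟩
  by_cases hF : K.prod ⊥ ≤ symGroup F
  · obtain ⟨σ, hσK, hσF⟩ := exists_transposition_mem_symGroup K hK F hF
    exact symGroup_ne_prod_bot_and_anonGroup_ne_prod_bot hσF hσK
  · exact ⟨fun h => hF h.ge, fun h => hF (h.ge.trans inf_le_left)⟩
end

section
/- Let V be a proper subgroup of S_h and suppose there exists a preference profile p ∈ P such that the stabilizer of p in S_h × {id} is contained in V × {id}, i.e. every φ ∈ S_h with p^{(φ,id)} = p lies in V. Then V × {id} is an anonymity group: there exists a social preference function F with G_1(F) = V × {id}. -/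
open Equiv

/-! Let `F` take a fixed `σ ≠ 1` on the `V`-orbit of `p` and the identity elsewhere (`n ≥ 2`
provides `σ`). A permutation of the individuals is an anonymity of `F` exactly when it maps this
orbit onto itself, and because the stabilizer of `p` lies in `V`, the set-stabilizer of the orbit
`V • p` is `V` itself. -/

open MulAction Pointwise

attribute [local instance] arrowAction

section OrbitStabilizer

variable {G X : Type*} [Group G] [MulAction G X]

theorem stabilizer_orbit_eq_of_stabilizer_le {V : Subgroup G} {x : X}
    (hx : stabilizer G x ≤ V) : stabilizer G (orbit V x) = V := by
  ext g
  rw [mem_stabilizer_set]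
  constructor
  · intro hg
    obtain ⟨v, hv⟩ : g • x ∈ orbit V x := (hg x).mpr (mem_orbit_self x)
    have hfix : (v : G)⁻¹ * g ∈ stabilizer G x := by
      rw [mem_stabilizer_iff, mul_smul, ← hv]
      exact inv_smul_smul (v : G) x
    simpa using V.mul_mem v.2 (hx hfix)
  · intro hg y
    rw [← orbit_eq_iff, ← orbit_eq_iff]
    exact Iff.of_eq (congrArg (· = orbit V x) (orbit_smul (⟨g, hg⟩ : V) y))

end OrbitStabilizer

variable {h n : ℕ}

theorem act_perm_one (φ : Perm (Fin h)) (q : Fin h → Perm (Fin n)) :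
    act (φ, 1) q = φ • q := by
  funext i
  exact one_mul _

theorem mem_anonGroup_iff {F : (Fin h → Perm (Fin n)) → Perm (Fin n)} {φ : Perm (Fin h)}
    {ψ : Perm (Fin n)} : (φ, ψ) ∈ anonGroup F ↔ (∀ q, F (φ • q) = F q) ∧ ψ = 1 := by
  simp only [anonGroup, Subgroup.mem_inf, Subgroup.mem_prod, Subgroup.mem_top, Subgroup.mem_bot,
    true_and]
  constructor <;> rintro ⟨hF, rfl⟩ <;> exact ⟨fun q => by simpa [act_perm_one] using hF q, rfl⟩

open Classical in
theorem anonGroup_ite_mem_eq (O : Set (Fin h → Perm (Fin n))) {σ : Perm (Fin n)} (hσ : σ ≠ 1) :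
    anonGroup (fun q => if q ∈ O then σ else 1) = (stabilizer (Perm (Fin h)) O).prod ⊥ := by
  ext ⟨φ, ψ⟩
  rw [mem_anonGroup_iff, Subgroup.mem_prod, mem_stabilizer_set, Subgroup.mem_bot]
  have hite : ∀ a b : Prop, ((if a then σ else 1) = if b then σ else 1) ↔ (a ↔ b) := by
    intro a b
    by_cases a <;> by_cases b <;> simp_all [eq_comm]
  simp only [hite]

theorem anonymity_of_small_stabilizer_general (h n : ℕ) (hn : 2 ≤ n)
    (V : Subgroup (Perm (Fin h)))
    (p : Fin h → Perm (Fin n))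
    (hstab : ∀ φ : Perm (Fin h), act (φ, (1 : Perm (Fin n))) p = p → φ ∈ V) :
    ∃ F : (Fin h → Perm (Fin n)) → Perm (Fin n),
      anonGroup F = V.prod (⊥ : Subgroup (Perm (Fin n))) := by
  have : Nontrivial (Fin n) := Fin.nontrivial_iff_two_le.mpr hn
  obtain ⟨σ, hσ⟩ := exists_ne (1 : Perm (Fin n))
  have hp : stabilizer (Perm (Fin h)) p ≤ V := fun φ hφ =>
    hstab φ ((act_perm_one φ p).trans hφ)
  refine ⟨_, (anonGroup_ite_mem_eq (orbit V p) hσ).trans ?_⟩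
  rw [stabilizer_orbit_eq_of_stabilizer_le hp]

/-- If `V < S_h` is proper and some profile `p` has its stabilizer in
`S_h × {id}` contained in `V × {id}`, then `V × {id}` is an anonymity group. -/
theorem anonymity_of_small_stabilizer (h n : ℕ) (hh : 2 ≤ h) (hn : 2 ≤ n)
    (V : Subgroup (Perm (Fin h))) (hV : V ≠ ⊤)
    (p : Fin h → Perm (Fin n))
    (hstab : ∀ φ : Perm (Fin h), act (φ, (1 : Perm (Fin n))) p = p → φ ∈ V) :
    ∃ F : (Fin h → Perm (Fin n)) → Perm (Fin n),
      anonGroup F = V.prod (⊥ : Subgroup (Perm (Fin n))) :=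
  anonymity_of_small_stabilizer_general h n hn V p hstab
end

section
/- Let h = 3 and n = 2. Then the subgroup {id} × S_2 of G = S_3 × S_2 is not a symmetry group: for every social preference function F : (S_2)^3 → S_2 one has G(F) ≠ {id} × S_2. -/
open Equiv

/-! If `{id} × S_2 ≤ G(F)` then `F` is neutral, and since `n = 2` every profile is, up to a
common relabelling `d` of the alternatives, either unanimous or has a single dissenting voter `j`.
So `F` is determined by its three values on the single-dissenter profiles `dissent j`. By
pigeonhole two of them agree, `F (dissent a) = F (dissent b)`, and then exchanging the voters `a`
and `b` is a symmetry of `F`, so `G(F)` contains `(swap a b, id) ∉ {id} × S_2`. -/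

theorem Subgroup.eq_bot_prod_top_iff {G K : Type*} [Group G] [Group K] (H : Subgroup (G × K)) :
    H = (⊥ : Subgroup G).prod ⊤ ↔ ∀ g : G × K, g ∈ H ↔ g.1 = 1 := by
  simp [SetLike.ext_iff, Subgroup.mem_prod]

def dissent {h : ℕ} (j : Fin h) : Fin h → Perm (Fin 2) :=
  Pi.mulSingle j (swap 0 1)

theorem dissent_comp_symm {h : ℕ} (σ : Perm (Fin h)) (j : Fin h) :
    dissent j ∘ σ.symm = dissent (σ j) :=
  Pi.mulSingle_comp_equiv σ.symm j _

theorem exists_eq_const_or_mul_dissent (p : Fin 3 → Perm (Fin 2)) :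
    ∃ d : Perm (Fin 2), p = (fun _ => d) ∨
      ∃ j : Fin 3, p = fun i => d * dissent j i := by
  revert p
  decide

theorem swap_mem_symGroup_of_eq {F : (Fin 3 → Perm (Fin 2)) → Perm (Fin 2)}
    (hneutral : ∀ d : Perm (Fin 2), (1, d) ∈ symGroup F) {a b : Fin 3}
    (hab : F (dissent a) = F (dissent b)) :
    (swap a b, 1) ∈ symGroup F := by
  have hF : ∀ d q, F (fun i => d * q i) = d * F q := fun d => hneutral d
  intro p
  obtain ⟨d, rfl | ⟨j, rfl⟩⟩ := exists_eq_const_or_mul_dissent p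
  · rfl -- a unanimous profile is fixed by every permutation of the voters
  · have hswap : act (swap a b, 1) (fun i => d * dissent j i) =
        fun i => d * dissent (swap a b j) i := by
      rw [← dissent_comp_symm]
      rfl
    rw [hswap, hF, hF, one_mul, apply_swap_eq_self (v := fun j => F (dissent j)) hab]

/-- For `(h,n) = (3,2)`, the subgroup `{id} × S_2` is not a symmetry group. -/
theorem id_times_S2_not_symmetry_group
    (F : (Fin 3 → Perm (Fin 2)) → Perm (Fin 2)) :
    symGroup F ≠
      (⊥ : Subgroup (Perm (Fin 3))).prod (⊤ : Subgroup (Perm (Fin 2))) := by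
  intro hF
  rw [Subgroup.eq_bot_prod_top_iff] at hF
  obtain ⟨a, b, hne, hab⟩ := Fintype.exists_ne_map_eq_of_card_lt
    (fun j => F (dissent j)) (by simp [Fintype.card_perm])
  have hmem := swap_mem_symGroup_of_eq (fun d => (hF (1, d)).2 rfl) hab
  exact hne (swap_eq_one_iff.1 ((hF _).1 hmem))
end

section
/- Let U, V ≤ G = S_h × S_n be subgroups such that the subgroup generated by U and V is regular. If U ≤_P V (every U-orbit on P is contained in the corresponding V-orbit), then every V-symmetric social preference function is U-symmetric, i.e. F^V ⊆ F^U. Consequently, if moreover V ≤_P U, then F^V = F^U. -/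
open Equiv

/-- `F` is `U`-symmetric: `F (p^g) = g.2 * F p` for all `g ∈ U`. -/
def USymmetric {h n : ℕ} (U : Subgroup (Perm (Fin h) × Perm (Fin n)))
    (F : (Fin h → Perm (Fin n)) → Perm (Fin n)) : Prop :=
  ∀ (p : Fin h → Perm (Fin n)) (g : Perm (Fin h) × Perm (Fin n)),
    g ∈ U → F (act g p) = g.2 * F p

/-- `U ≤_P V`: every `U`-orbit on profiles is contained in the corresponding `V`-orbit. -/
def orbLE {h n : ℕ} (U V : Subgroup (Perm (Fin h) × Perm (Fin n))) : Prop :=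
  ∀ (p : Fin h → Perm (Fin n)) (g : Perm (Fin h) × Perm (Fin n)),
    g ∈ U → ∃ g' ∈ V, act g p = act g' p

section

variable {h n : ℕ}

lemma act_mul (a b : Perm (Fin h) × Perm (Fin n)) (p : Fin h → Perm (Fin n)) :
    act (a * b) p = act a (act b p) := by
  funext i
  simp [act, mul_assoc]

lemma act_one (p : Fin h → Perm (Fin n)) : act 1 p = p := by
  funext i
  simp [act]

lemma IsRegularSubgroup.snd_eq_of_act_eq {W : Subgroup (Perm (Fin h) × Perm (Fin n))}
    (hW : IsRegularSubgroup W) {g g' : Perm (Fin h) × Perm (Fin n)} (hg : g ∈ W) (hg' : g' ∈ W)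
    {p : Fin h → Perm (Fin n)} (hp : act g p = act g' p) : g.2 = g'.2 := by
  have hfix : act (g'⁻¹ * g) p = p := by
    rw [act_mul, hp, ← act_mul, inv_mul_cancel, act_one]
  have hsnd : g'.2⁻¹ * g.2 = 1 := hW p _ (mul_mem (inv_mem hg') hg) hfix
  exact (inv_mul_eq_one.mp hsnd).symm

lemma USymmetric.of_orbLE {U V : Subgroup (Perm (Fin h) × Perm (Fin n))}
    (hreg : IsRegularSubgroup (U ⊔ V)) (hUV : orbLE U V)
    {F : (Fin h → Perm (Fin n)) → Perm (Fin n)} (hF : USymmetric V F) : USymmetric U F := by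
  intro p g hg
  obtain ⟨g', hg', hp⟩ := hUV p g hg
  rw [hp, hF p g' hg',
    hreg.snd_eq_of_act_eq (Subgroup.mem_sup_left hg) (Subgroup.mem_sup_right hg') hp]

end

theorem orbit_containment_symmetric_general (h n : ℕ)
    (U V : Subgroup (Perm (Fin h) × Perm (Fin n)))
    (hreg : IsRegularSubgroup (U ⊔ V)) (hUV : orbLE U V) :
    (∀ F : (Fin h → Perm (Fin n)) → Perm (Fin n),
        USymmetric V F → USymmetric U F) ∧
    (orbLE V U →
      ∀ F : (Fin h → Perm (Fin n)) → Perm (Fin n),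
        USymmetric V F ↔ USymmetric U F) := by
  have hreg' : IsRegularSubgroup (V ⊔ U) := by rwa [sup_comm]
  exact ⟨fun _ => .of_orbLE hreg hUV,
    fun hVU _ => ⟨.of_orbLE hreg hUV, .of_orbLE hreg' hVU⟩⟩

/-- If `⟨U,V⟩` is regular and `U ≤_P V`, then every `V`-symmetric SPF is
`U`-symmetric; if moreover `V ≤_P U`, the two symmetry classes coincide. -/
theorem orbit_containment_symmetric (h n : ℕ) (hh : 2 ≤ h) (hn : 2 ≤ n)
    (U V : Subgroup (Perm (Fin h) × Perm (Fin n)))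
    (hreg : IsRegularSubgroup (U ⊔ V)) (hUV : orbLE U V) :
    (∀ F : (Fin h → Perm (Fin n)) → Perm (Fin n),
        USymmetric V F → USymmetric U F) ∧
    (orbLE V U →
      ∀ F : (Fin h → Perm (Fin n)) → Perm (Fin n),
        USymmetric V F ↔ USymmetric U F) :=
  orbit_containment_symmetric_general h n U V hreg hUV
end
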